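/- Let W = 1 and 2 ≤ d < ∞, and let Φ : ℝ → ℝ^d be C¹. Then the set F_Φ of learnable targets has Lebesgue measure 0 in ℝ^d. -/

import Mathlib

open MeasureTheory Filter Topology Set

/-- The square loss for a one-parameter model. -/
noncomputable def loss1 {d : ℕ} (Φ : ℝ → EuclideanSpace ℝ (Fin d))
    (f : EuclideanSpace ℝ (Fin d)) (w : ℝ) : ℝ :=
  (1 / 2) * ‖f - Φ w‖ ^ 2

/-- The set of targets learnable by gradient flow for a one-parameter model. -/
def learnableSet1 {d : ℕ} (Φ : ℝ → EuclideanSpace ℝ (Fin d)) :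
    Set (EuclideanSpace ℝ (Fin d)) :=
  {f | ∃ w : ℝ → ℝ, w 0 = 0 ∧
    (∀ t ≥ (0 : ℝ), HasDerivAt w (-(deriv (loss1 Φ f) (w t))) t) ∧
    (⨅ t : Set.Ici (0 : ℝ), loss1 Φ f (w t)) = 0}

/-!
A learnable target `f` is approached along the gradient-flow trajectory: the loss decreases along
the flow and its infimum is `0`, so `Φ (w t) → f`. If the trajectory `w t` has a cluster point `c`,
then `f = Φ c` by continuity; otherwise `|w t| → ∞`, and by the intermediate value theorem `w`
eventually keeps one sign and sweeps through every large value, so `Φ` itself tends to `f` at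
`+∞` or `-∞`. Hence `f` lies on the curve `range Φ` or is one of its (at most two) endpoints at
infinity, and the curve is Lebesgue-null in dimension `d ≥ 2`.
-/

open Module Function

/-- Sard in the easiest case: `x ↦ Φ (ℓ x)` maps `E` onto `range Φ` and its derivative factors
through the non-injective functional `ℓ`, so its Jacobian vanishes everywhere. -/
theorem MeasureTheory.Measure.addHaar_range_eq_zero_of_differentiable {E : Type*}
    [NormedAddCommGroup E] [NormedSpace ℝ E] [FiniteDimensional ℝ E] [MeasurableSpace E]
    [BorelSpace E] (μ : Measure E) [μ.IsAddHaarMeasure] (hE : 1 < finrank ℝ E) {Φ : ℝ → E}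
    (hΦ : Differentiable ℝ Φ) : μ (range Φ) = 0 := by
  have : Nontrivial E := nontrivial_of_finrank_pos (zero_lt_one.trans hE)
  obtain ⟨v, hv⟩ := exists_ne (0 : E)
  obtain ⟨ℓ, -, hℓv⟩ := exists_dual_vector' ℝ v
  have hℓ : Surjective ℓ := fun r =>
    ⟨(r / ‖v‖) • v, by simp [hℓv, norm_ne_zero_iff.2 hv]⟩
  have hker : LinearMap.ker (ℓ : E →ₗ[ℝ] ℝ) ≠ ⊥ :=
    LinearMap.ker_ne_bot_of_finrank_lt (by simpa using hE)
  rw [← hℓ.range_comp, ← image_univ]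
  refine addHaar_image_eq_zero_of_det_fderivWithin_eq_zero μ
    (f' := fun x => (fderiv ℝ Φ (ℓ x)).comp ℓ) (fun x _ => ?_) (fun x _ => ?_)
  · exact ((hΦ (ℓ x)).hasFDerivAt.comp x ℓ.hasFDerivAt).hasFDerivWithinAt
  · rw [ContinuousLinearMap.det, LinearMap.det_eq_zero_iff_ker_ne_bot]
    refine ne_bot_of_le_ne_bot hker fun y hy => ?_
    simp_all

theorem Filter.tendsto_cocompact_of_forall_not_mapClusterPt {X ι : Type*} [TopologicalSpace X]
    {l : Filter ι} {u : ι → X} (h : ∀ x, ¬MapClusterPt x l u) : Tendsto u l (cocompact X) :=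
  hasBasis_cocompact.tendsto_right_iff.2 fun K hK => by
    by_contra hfreq
    obtain ⟨x, -, hx⟩ := hK.exists_mapClusterPt_of_frequently (by simpa using hfreq)
    exact h x hx

theorem tendsto_atBot_or_atTop_of_continuousOn_Ici {w : ℝ → ℝ} {a : ℝ}
    (hw : ContinuousOn w (Ici a)) (hlim : Tendsto w atTop (atBot ⊔ atTop)) :
    Tendsto w atTop atBot ∨ Tendsto w atTop atTop := by
  have hne : ∀ᶠ t in atTop, w t ∈ Iio 0 ∪ Ioi 0 ∧ a ≤ t :=
    (hlim.eventually (mem_sup.2 ⟨mem_of_superset (Iio_mem_atBot 0) subset_union_left,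
      mem_of_superset (Ioi_mem_atTop 0) subset_union_right⟩)).and (eventually_ge_atTop a)
  obtain ⟨T, hT⟩ := eventually_atTop.1 hne
  have hconn : IsPreconnected (w '' Ici T) :=
    isPreconnected_Ici.image w (hw.mono fun t ht => (hT T le_rfl).2.trans ht)
  have hsign := hconn.subset_or_subset isOpen_Iio isOpen_Ioi (Ioi_disjoint_Iio_of_le le_rfl).symm
    (image_subset_iff.2 fun t ht => (hT t ht).1)
  have hev : ∀ {s : Set ℝ}, w '' Ici T ⊆ s → ∀ᶠ t in atTop, w t ∈ s := fun hs =>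
    eventually_atTop.2 ⟨T, fun t ht => hs (mem_image_of_mem w ht)⟩
  rcases hsign with hneg | hpos
  · left
    have := tendsto_inf.2 ⟨hlim, tendsto_principal.2 (hev hneg)⟩
    rw [inf_sup_right, (disjoint_atTop_principal_Iio 0).eq_bot, sup_bot_eq] at this
    exact this.mono_right inf_le_left
  · right
    have := tendsto_inf.2 ⟨hlim, tendsto_principal.2 (hev hpos)⟩
    rw [inf_sup_right, (disjoint_atBot_principal_Ioi 0).eq_bot, bot_sup_eq] at this
    exact this.mono_right inf_le_left

/-- Once `w` is continuous and unbounded above, it attains every large value at arbitrarily large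
times (intermediate value theorem). -/
theorem Filter.Tendsto.of_comp_of_tendsto_atTop {X : Type*} [TopologicalSpace X] {g : ℝ → X}
    {w : ℝ → ℝ} {a : ℝ} {x : X} (hg : Tendsto (g ∘ w) atTop (𝓝 x))
    (hw : ContinuousOn w (Ici a)) (hwt : Tendsto w atTop atTop) : Tendsto g atTop (𝓝 x) := by
  intro U hU
  obtain ⟨T, hT⟩ := eventually_atTop.1 ((hg.eventually_mem hU).and (eventually_ge_atTop a))
  refine mem_map.2 (mem_atTop_sets.2 ⟨w T, fun s hs => ?_⟩)
  obtain ⟨T', hsT', hTT'⟩ := ((hwt.eventually_ge_atTop s).and (eventually_ge_atTop T)).exists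
  obtain ⟨t, ht, rfl⟩ := intermediate_value_Icc hTT'
    (hw.mono fun t ht => (hT T le_rfl).2.trans ht.1) ⟨hs, hsT'⟩
  exact (hT t ht.1).1

theorem Filter.Tendsto.of_comp_of_tendsto_atBot {X : Type*} [TopologicalSpace X] {g : ℝ → X}
    {w : ℝ → ℝ} {a : ℝ} {x : X} (hg : Tendsto (g ∘ w) atTop (𝓝 x))
    (hw : ContinuousOn w (Ici a)) (hwt : Tendsto w atTop atBot) : Tendsto g atBot (𝓝 x) := by
  have h := Tendsto.of_comp_of_tendsto_atTop (g := g ∘ Neg.neg) (w := fun t => -w t)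
    (by simpa [comp_def] using hg) hw.neg (tendsto_neg_atBot_atTop.comp hwt)
  simpa [comp_def] using h.comp tendsto_neg_atBot_atTop

theorem mem_range_or_tendsto_of_tendsto_comp {X : Type*} [TopologicalSpace X] [T2Space X]
    {g : ℝ → X} {w : ℝ → ℝ} {a : ℝ} {x : X} (hg : Continuous g) (hw : ContinuousOn w (Ici a))
    (hgw : Tendsto (g ∘ w) atTop (𝓝 x)) :
    x ∈ range g ∨ Tendsto g atTop (𝓝 x) ∨ Tendsto g atBot (𝓝 x) := by
  by_cases hc : ∃ c, MapClusterPt c atTop w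
  · obtain ⟨c, hc⟩ := hc
    exact Or.inl ⟨c, eq_of_nhds_neBot
      (ClusterPt.mono (hc.continuousAt_comp hg.continuousAt) hgw).neBot⟩
  · push Not at hc
    have hlim := tendsto_cocompact_of_forall_not_mapClusterPt hc
    rw [cocompact_eq_atBot_atTop] at hlim
    rcases tendsto_atBot_or_atTop_of_continuousOn_Ici hw hlim with hbot | htop
    · exact Or.inr (Or.inr (hgw.of_comp_of_tendsto_atBot hw hbot))
    · exact Or.inr (Or.inl (hgw.of_comp_of_tendsto_atTop hw htop))

theorem antitoneOn_comp_of_hasDerivAt_neg_deriv {L w : ℝ → ℝ} {a : ℝ} (hL : Differentiable ℝ L)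
    (hw : ∀ t ≥ a, HasDerivAt w (-deriv L (w t)) t) : AntitoneOn (L ∘ w) (Ici a) := by
  have hLw : ∀ t ≥ a, HasDerivAt (L ∘ w) (deriv L (w t) * -deriv L (w t)) t := fun t ht =>
    (hL (w t)).hasDerivAt.comp t (hw t ht)
  refine antitoneOn_of_hasDerivWithinAt_nonpos (convex_Ici a)
    (fun t ht => (hLw t ht).continuousAt.continuousWithinAt)
    (fun t ht => (hLw t (interior_subset ht)).hasDerivWithinAt) fun t _ => ?_
  nlinarith [sq_nonneg (deriv L (w t))]

section Loss

variable {d : ℕ} {Φ : ℝ → EuclideanSpace ℝ (Fin d)} {f : EuclideanSpace ℝ (Fin d)}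

theorem loss1_nonneg (w : ℝ) : 0 ≤ loss1 Φ f w := by
  unfold loss1; positivity

theorem differentiable_loss1 (hΦ : Differentiable ℝ Φ) : Differentiable ℝ (loss1 Φ f) :=
  (((differentiable_const f).sub hΦ).norm_sq ℝ).const_mul _

theorem tendsto_of_tendsto_loss1_zero {ι : Type*} {l : Filter ι} {v : ι → ℝ}
    (h : Tendsto (fun i => loss1 Φ f (v i)) l (𝓝 0)) : Tendsto (Φ ∘ v) l (𝓝 f) := by
  rw [tendsto_iff_norm_sub_tendsto_zero]
  have := (h.const_mul 2).sqrt
  simpa [loss1, norm_sub_rev, ← mul_assoc] using this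

theorem exists_tendsto_of_mem_learnableSet1 (hΦ : Differentiable ℝ Φ) (hf : f ∈ learnableSet1 Φ) :
    ∃ w : ℝ → ℝ, ContinuousOn w (Ici 0) ∧ Tendsto (Φ ∘ w) atTop (𝓝 f) := by
  obtain ⟨w, -, hw, hinf⟩ := hf
  refine ⟨w, fun t ht => (hw t ht).continuousAt.continuousWithinAt, ?_⟩
  have hanti := antitoneOn_comp_of_hasDerivAt_neg_deriv (differentiable_loss1 hΦ) hw
  have hloss := tendsto_atTop_ciInf (f := fun t : Ici (0 : ℝ) => loss1 Φ f (w t))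
    (fun s t hst => hanti s.2 t.2 hst) ⟨0, forall_mem_range.2 fun _ => loss1_nonneg _⟩
  rw [hinf] at hloss
  exact tendsto_of_tendsto_loss1_zero (tendsto_comp_val_Ici_atTop.1 hloss)

theorem learnableSet1_subset (hΦ : Differentiable ℝ Φ) :
    learnableSet1 Φ ⊆ range Φ ∪ ({f | Tendsto Φ atTop (𝓝 f)} ∪ {f | Tendsto Φ atBot (𝓝 f)}) :=
  fun _ hf =>
    let ⟨_, hw, hΦw⟩ := exists_tendsto_of_mem_learnableSet1 hΦ hf
    mem_range_or_tendsto_of_tendsto_comp hΦ.continuous hw hΦw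

end Loss

theorem one_param_learnable_measure_zero (d : ℕ) (hd : 2 ≤ d)
    (Φ : ℝ → EuclideanSpace ℝ (Fin d))
    (hΦ : ContDiff ℝ 1 Φ) :
    MeasureTheory.volume (learnableSet1 Φ) = 0 := by
  have hdim : 1 < finrank ℝ (EuclideanSpace ℝ (Fin d)) := by simpa [Nat.lt_iff_add_one_le] using hd
  have : Nontrivial (EuclideanSpace ℝ (Fin d)) := nontrivial_of_finrank_pos (one_pos.trans hdim)
  have hdiff : Differentiable ℝ Φ := hΦ.differentiable one_ne_zero
  have hends (l : Filter ℝ) [l.NeBot] : volume {f | Tendsto Φ l (𝓝 f)} = 0 :=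
    Set.Subsingleton.measure_zero (fun _ hp _ hq => tendsto_nhds_unique hp hq) _
  exact measure_mono_null (learnableSet1_subset hdiff) <| measure_union_null
    (volume.addHaar_range_eq_zero_of_differentiable hdim hdiff)
    (measure_union_null (hends atTop) (hends atBot))
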